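/- Let K_n denote the n-th generation of the four-corner Cantor set and θ* = arctan(1/2). Then for every n ≥ 0, |π_{θ*} K_n| = |π_{θ*} K_0|, i.e. the projection length at angle θ* is constant in n. -/

import Mathlib

open MeasureTheory

/-- Orthogonal projection of the plane onto the line at angle θ. -/
noncomputable def proj (θ : ℝ) (p : ℝ × ℝ) : ℝ :=
  p.1 * Real.cos θ + p.2 * Real.sin θ

/-- The four translation vectors of the four-corner Cantor set. -/
noncomputable def betas : Finset (ℝ × ℝ) := {(0, 0), (0, 3/4), (3/4, 0), (3/4, 3/4)}

/-- Generations of the four-corner Cantor set. -/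
def fourCorner : ℕ → Set (ℝ × ℝ)
  | 0 => Set.Icc (0:ℝ) 1 ×ˢ Set.Icc (0:ℝ) 1
  | n + 1 => ⋃ b ∈ betas, (fun p : ℝ × ℝ => ((1/4) * p.1 + b.1, (1/4) * p.2 + b.2)) '' fourCorner n

noncomputable def S : ℝ := Real.sin (Real.arctan (1/2))

lemma hS : 0 < S := by
  rw [S, Real.sin_arctan]
  positivity

lemma hC : Real.cos (Real.arctan (1/2)) = 2 * S := by
  rw [S, Real.cos_arctan, Real.sin_arctan]
  ring

lemma hSdef : Real.sin (Real.arctan (1/2)) = S := rfl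

lemma image_affine (c : ℝ) (a : ℝ) (_ha : 0 ≤ a) :
    (fun t : ℝ => (1/4) * t + c) '' Set.Icc 0 a = Set.Icc c (c + a/4) := by
  ext t
  constructor
  · rintro ⟨u, ⟨hu0, hua⟩, rfl⟩
    constructor <;> dsimp <;> linarith
  · rintro ⟨h1, h2⟩
    exact ⟨4 * (t - c), ⟨by linarith, by linarith⟩, by dsimp; ring⟩

lemma proj_image (n : ℕ) :
    proj (Real.arctan (1/2)) '' fourCorner n = Set.Icc 0 (3 * S) := by
  induction n with
  | zero =>
    ext t
    constructor
    · rintro ⟨⟨x, y⟩, ⟨⟨hx0, hx1⟩, ⟨hy0, hy1⟩⟩, rfl⟩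
      simp only [proj, hC, hSdef]
      constructor
      · nlinarith [hS]
      · nlinarith [hS]
    · rintro ⟨h0, h3⟩
      have h3S : (0:ℝ) < 3*S := by linarith [hS]
      refine ⟨(t / (3*S), t / (3*S)), ⟨⟨?_, ?_⟩, ?_, ?_⟩, ?_⟩
      · exact div_nonneg h0 h3S.le
      · rw [div_le_one h3S]; exact h3
      · exact div_nonneg h0 h3S.le
      · rw [div_le_one h3S]; exact h3
      · simp only [proj, hC, hSdef]
        field_simp
        rw [div_eq_iff hS.ne']; ring
  | succ n ih =>
    have key : ∀ b : ℝ × ℝ,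
        proj (Real.arctan (1/2)) ''
          ((fun p : ℝ × ℝ => ((1/4) * p.1 + b.1, (1/4) * p.2 + b.2)) '' fourCorner n)
        = Set.Icc (proj (Real.arctan (1/2)) b)
            (proj (Real.arctan (1/2)) b + (3*S)/4) := by
      intro b
      rw [Set.image_image]
      have hSle := hS
      have : (fun p : ℝ × ℝ => proj (Real.arctan (1/2)) ((1/4) * p.1 + b.1, (1/4) * p.2 + b.2))
          = (fun t : ℝ => (1/4) * t + proj (Real.arctan (1/2)) b) ∘ proj (Real.arctan (1/2)) := by
        funext p; simp [proj, hSdef]; ring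
      rw [this, Set.image_comp, ih, image_affine _ _ (by nlinarith [hS])]
    have expand : fourCorner (n+1) =
        ((fun p : ℝ × ℝ => ((1/4) * p.1 + (0:ℝ), (1/4) * p.2 + (0:ℝ))) '' fourCorner n) ∪
        (((fun p : ℝ × ℝ => ((1/4) * p.1 + (0:ℝ), (1/4) * p.2 + (3/4:ℝ))) '' fourCorner n) ∪
        (((fun p : ℝ × ℝ => ((1/4) * p.1 + (3/4:ℝ), (1/4) * p.2 + (0:ℝ))) '' fourCorner n) ∪
        ((fun p : ℝ × ℝ => ((1/4) * p.1 + (3/4:ℝ), (1/4) * p.2 + (3/4:ℝ))) '' fourCorner n))) := by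
      show (⋃ b ∈ betas, _) = _
      rw [betas]
      simp [Finset.set_biUnion_insert]
    rw [expand, Set.image_union, Set.image_union, Set.image_union,
      key (0,0), key (0,3/4), key (3/4,0), key (3/4,3/4)]
    have hp1 : proj (Real.arctan (1/2)) (0,0) = 0 := by simp [proj]
    have hp2 : proj (Real.arctan (1/2)) (0,3/4) = (3/4) * S := by
      simp only [proj]; rw [hSdef]; ring
    have hp3 : proj (Real.arctan (1/2)) (3/4,0) = (3/2) * S := by
      simp only [proj]; rw [hC, hSdef]; ring
    have hp4 : proj (Real.arctan (1/2)) (3/4,3/4) = (9/4) * S := by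
      simp only [proj]; rw [hC, hSdef]; ring
    rw [hp1, hp2, hp3, hp4]
    have hSle := hS.le
    rw [show (0:ℝ) + 3*S/4 = 3/4 * S by ring,
        show (3/4:ℝ) * S + 3*S/4 = 3/2 * S by ring,
        show (3/2:ℝ) * S + 3*S/4 = 9/4 * S by ring,
        show (9/4:ℝ) * S + 3*S/4 = 3 * S by ring]
    rw [Set.Icc_union_Icc_eq_Icc (by nlinarith) (by nlinarith),
        Set.Icc_union_Icc_eq_Icc (by nlinarith) (by nlinarith),
        Set.Icc_union_Icc_eq_Icc (by nlinarith) (by nlinarith)]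

/-- At θ* = arctan(1/2), the projection length of every generation of the
four-corner Cantor set equals that of the unit square. -/
theorem proj_fourCorner_const (n : ℕ) :
    volume (proj (Real.arctan (1/2)) '' fourCorner n)
      = volume (proj (Real.arctan (1/2)) '' fourCorner 0) := by
  rw [proj_image n, proj_image 0]
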